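/- Let S be a set of 4 points in the plane in general position, and let s and t be two consecutive vertices of the boundary of the convex hull of S. Then S contains two edge-disjoint plane Hamiltonian paths, one starting at s and the other starting at t. -/

import Mathlib

open Set
open scoped Classical

noncomputable section

/-- Points in the plane. -/
abbrev Pt : Type := ℝ × ℝ

/-- Orientation determinant of the triple `(a, b, p)`:
positive iff `p` lies strictly to the left of the directed line from `a` to `b`. -/
def det3 (a b p : Pt) : ℝ :=
  (b.1 - a.1) * (p.2 - a.2) - (b.2 - a.2) * (p.1 - a.1)

/-- A finite point set is in general position if no three of its points are collinear. -/
def GenPos (S : Finset Pt) : Prop :=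
  ∀ p ∈ S, ∀ q ∈ S, ∀ r ∈ S,
    p ≠ q → p ≠ r → q ≠ r → ¬ Collinear ℝ ({p, q, r} : Set Pt)

/-- The list of (directed) edges of a polygonal path given by its list of vertices. -/
def edgeList (l : List Pt) : List (Pt × Pt) := l.zip l.tail

/-- The segment `ab` is an edge of the path `l`, i.e. `a` and `b` are consecutive on `l`. -/
def IsEdgeOf (a b : Pt) (l : List Pt) : Prop :=
  (a, b) ∈ edgeList l ∨ (b, a) ∈ edgeList l

/-- `l` is a plane (crossing-free) Hamiltonian path on the point set `S`:
its vertices are exactly the points of `S`, each visited once, and any two distinct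
edges intersect only in common endpoints. -/
def PlanePath (S : Finset Pt) (l : List Pt) : Prop :=
  l.Nodup ∧ l.toFinset = S ∧
  ∀ e ∈ edgeList l, ∀ f ∈ edgeList l, e ≠ f →
    segment ℝ e.1 e.2 ∩ segment ℝ f.1 f.2 ⊆
      (({e.1, e.2} : Set Pt) ∩ ({f.1, f.2} : Set Pt))

/-- Two paths are edge-disjoint: no segment is an edge of both. -/
def EdgeDisjoint (l₁ l₂ : List Pt) : Prop :=
  ∀ x y : Pt, IsEdgeOf x y l₁ → ¬ IsEdgeOf x y l₂

/-- `p` is a vertex of the boundary of the convex hull of `S`. -/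
def HullVertex (S : Finset Pt) (p : Pt) : Prop :=
  p ∈ Set.extremePoints ℝ (convexHull ℝ (S : Set Pt))

/-- `ab` is an edge of the boundary of the convex hull of `S`, i.e. `a` and `b` are
consecutive hull vertices: all other points of `S` lie strictly on one side of line `ab`. -/
def IsHullEdge (S : Finset Pt) (a b : Pt) : Prop :=
  a ∈ S ∧ b ∈ S ∧ a ≠ b ∧
  ((∀ p ∈ S, p ≠ a → p ≠ b → 0 < det3 a b p) ∨
   (∀ p ∈ S, p ≠ a → p ≠ b → det3 a b p < 0))

/-- The segment `xy` is a bridge over the line through `a` and `b`: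
it crosses the line `ℓ(ab)` but not the segment `ab`. -/
def IsBridge (a b x y : Pt) : Prop :=
  det3 a b x * det3 a b y < 0 ∧ segment ℝ x y ∩ segment ℝ a b = ∅

/-- The set of common edges of the two paths is exactly the segment `ab`. -/
def SharesExactly (a b : Pt) (l₁ l₂ : List Pt) : Prop :=
  IsEdgeOf a b l₁ ∧ IsEdgeOf a b l₂ ∧
  ∀ x y : Pt, IsEdgeOf x y l₁ → IsEdgeOf x y l₂ → ({x, y} : Set Pt) = ({a, b} : Set Pt)

/-!
Write `S = {s, t, u, v}`. As `st` is a hull edge, `u` and `v` lie on one side of the line `st`;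
label them so that `t` and `u` also lie on one side of the line `sv`. Then `s t v u` and
`t u s v` are plane paths: two consecutive edges meet only in their common vertex by general
position, and the non-consecutive edges `st`, `vu` (resp. `tu`, `sv`) are disjoint because the
endpoints of one lie strictly on one side of the line through the other. Their edge sets
`{st, tv, vu}` and `{tu, us, sv}` are disjoint.
-/

@[simp] theorem det3_self_left (a b : Pt) : det3 a b a = 0 := by
  simp only [det3]; ring

@[simp] theorem det3_self_right (a b : Pt) : det3 a b b = 0 := by
  simp only [det3]; ring

theorem det3_cyclic (a b c : Pt) : det3 b c a = det3 a b c := by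
  simp only [det3]; ring

theorem det3_swap (a b c : Pt) : det3 a c b = -det3 a b c := by
  simp only [det3]; ring

theorem det3_lineMap (p q x y : Pt) (θ : ℝ) :
    det3 p q (AffineMap.lineMap x y θ) = (1 - θ) * det3 p q x + θ * det3 p q y := by
  simp only [det3, AffineMap.lineMap_apply_module, Prod.fst_add, Prod.snd_add, Prod.smul_fst,
    Prod.smul_snd, smul_eq_mul]
  ring

theorem det3_eq_zero_of_mem_segment {a b z : Pt} (hz : z ∈ segment ℝ a b) :
    det3 a b z = 0 := by
  rw [segment_eq_image_lineMap] at hz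
  obtain ⟨θ, -, rfl⟩ := hz
  simp [det3_lineMap]

theorem disjoint_segment_of_det3_mul_pos {a b c d : Pt} (h : 0 < det3 a b c * det3 a b d) :
    Disjoint (segment ℝ a b) (segment ℝ c d) := by
  rw [Set.disjoint_left]
  intro z hab hcd
  rw [segment_eq_image_lineMap] at hcd
  obtain ⟨θ, ⟨hθ0, hθ1⟩, rfl⟩ := hcd
  have h0 := det3_eq_zero_of_mem_segment hab
  rw [det3_lineMap] at h0
  rcases mul_pos_iff.mp h with ⟨hc, hd⟩ | ⟨hc, hd⟩
  · nlinarith [mul_pos hc hd, mul_nonneg hθ0 hd.le, mul_nonneg (sub_nonneg.2 hθ1) hc.le]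
  · nlinarith [mul_pos_of_neg_of_neg hc hd, mul_nonpos_of_nonneg_of_nonpos hθ0 hd.le,
      mul_nonpos_of_nonneg_of_nonpos (sub_nonneg.2 hθ1) hc.le]

theorem segment_inter_segment_subset_singleton {a b c : Pt} (h : det3 a b c ≠ 0) :
    segment ℝ a b ∩ segment ℝ b c ⊆ {b} := by
  rintro z ⟨hab, hbc⟩
  rw [segment_symm, segment_eq_image_lineMap] at hab
  obtain ⟨θ, -, rfl⟩ := hab
  have h0 := det3_eq_zero_of_mem_segment hbc
  rw [det3_lineMap, det3_self_left, det3_cyclic, mul_zero, zero_add] at h0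
  simp [(mul_eq_zero.mp h0).resolve_right h]

theorem collinear_of_det3_eq_zero {p q r : Pt} (hpq : p ≠ q) (h : det3 p q r = 0) :
    Collinear ℝ ({p, q, r} : Set Pt) := by
  have hn : (q.1 - p.1) ^ 2 + (q.2 - p.2) ^ 2 ≠ 0 := by
    intro h0
    exact hpq (Prod.ext (by nlinarith [sq_nonneg (q.1 - p.1), sq_nonneg (q.2 - p.2)])
      (by nlinarith [sq_nonneg (q.1 - p.1), sq_nonneg (q.2 - p.2)]))
  rw [collinear_iff_of_mem (Set.mem_insert p _)]
  refine ⟨q - p, ?_⟩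
  simp only [Set.mem_insert_iff, Set.mem_singleton_iff]
  rintro x (rfl | rfl | rfl)
  · exact ⟨0, by simp⟩
  · exact ⟨1, by simp⟩
  -- the coefficient of the orthogonal projection of `x - p` onto `q - p`
  · refine ⟨((x.1 - p.1) * (q.1 - p.1) + (x.2 - p.2) * (q.2 - p.2)) /
      ((q.1 - p.1) ^ 2 + (q.2 - p.2) ^ 2), Prod.ext ?_ ?_⟩
    · simp only [det3] at h
      simp only [vadd_eq_add, Prod.fst_add, Prod.smul_fst, Prod.fst_sub, smul_eq_mul]
      field_simp
      linear_combination (-(q.2 - p.2)) * h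
    · simp only [det3] at h
      simp only [vadd_eq_add, Prod.snd_add, Prod.smul_snd, Prod.snd_sub, smul_eq_mul]
      field_simp
      linear_combination (q.1 - p.1) * h

theorem GenPos.det3_ne_zero {S : Finset Pt} (hgp : GenPos S) {a b c : Pt} (ha : a ∈ S)
    (hb : b ∈ S) (hc : c ∈ S) (hab : a ≠ b) (hac : a ≠ c) (hbc : b ≠ c) :
    det3 a b c ≠ 0 :=
  fun h => hgp a ha b hb c hc hab hac hbc (collinear_of_det3_eq_zero hab h)

theorem planePath_four_of_disjoint_segment {S : Finset Pt} (hgp : GenPos S) {a b c d : Pt}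
    (hl : [a, b, c, d].Nodup) (hS : [a, b, c, d].toFinset = S)
    (hdisj : Disjoint (segment ℝ a b) (segment ℝ c d)) : PlanePath S [a, b, c, d] := by
  refine ⟨hl, hS, ?_⟩
  have hmem : a ∈ S ∧ b ∈ S ∧ c ∈ S ∧ d ∈ S := by simp [← hS]
  simp only [List.nodup_cons, List.mem_cons, List.not_mem_nil, or_false, not_or] at hl
  have habc := segment_inter_segment_subset_singleton
    (hgp.det3_ne_zero hmem.1 hmem.2.1 hmem.2.2.1 hl.1.1 hl.1.2.1 hl.2.1.1)
  have hbcd := segment_inter_segment_subset_singleton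
    (hgp.det3_ne_zero hmem.2.1 hmem.2.2.1 hmem.2.2.2 hl.2.1.1 hl.2.1.2 hl.2.2.1)
  have hE : edgeList [a, b, c, d] = [(a, b), (b, c), (c, d)] := rfl
  rw [hE]
  simp only [List.mem_cons, List.not_mem_nil, or_false]
  rintro e (rfl | rfl | rfl) f (rfl | rfl | rfl) hef
  all_goals first
    | exact absurd rfl hef
    | exact habc.trans (by simp)
    | exact (Set.inter_comm _ _).subset.trans (habc.trans (by simp))
    | exact hbcd.trans (by simp)
    | exact (Set.inter_comm _ _).subset.trans (hbcd.trans (by simp))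
    | simp [hdisj.inter_eq, hdisj.symm.inter_eq]

theorem edgeDisjoint_of_nodup {s t u v : Pt} (h : [s, t, u, v].Nodup) :
    EdgeDisjoint [s, t, v, u] [t, u, s, v] := by
  intro x y h₁ h₂
  simp only [List.nodup_cons, List.mem_cons, List.not_mem_nil, or_false, not_or] at h
  simp [IsEdgeOf, edgeList] at h₁ h₂
  grind

theorem exists_nodup_toFinset_eq {S : Finset Pt} (hcard : S.card = 4) {s t : Pt} (hs : s ∈ S)
    (ht : t ∈ S) (hst : s ≠ t) : ∃ u v, [s, t, u, v].Nodup ∧ [s, t, u, v].toFinset = S := by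
  have ht' : t ∈ S.erase s := Finset.mem_erase.2 ⟨hst.symm, ht⟩
  have hcard₂ : ((S.erase s).erase t).card = 2 := by
    rw [Finset.card_erase_of_mem ht', Finset.card_erase_of_mem hs, hcard]
  obtain ⟨u, v, -, h⟩ := Finset.card_eq_two.mp hcard₂
  have hS : [s, t, u, v].toFinset = S := by
    rw [← Finset.insert_erase hs, ← Finset.insert_erase ht', h]
    simp
  refine ⟨u, v, ?_, hS⟩
  exact Multiset.coe_nodup.mp
    (Multiset.toFinset_card_eq_card_iff_nodup.mp ((congrArg Finset.card hS).trans hcard))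

/- Seen from `s`, whichever of `u`, `v` is angularly farther from `t` has the other two points
on one side of its line. -/
theorem det3_mul_pos_or_det3_mul_pos {s t u v : Pt} (h : 0 < det3 s t u * det3 s t v)
    (hsuv : det3 s u v ≠ 0) : 0 < det3 s v t * det3 s v u ∨ 0 < det3 s u t * det3 s u v := by
  rw [det3_swap s t v, det3_swap s u v, det3_swap s t u]
  rcases mul_pos_iff.mp h with ⟨hu, hv⟩ | ⟨hu, hv⟩ <;> rcases hsuv.lt_or_gt with hc | hc
  all_goals first | (left; nlinarith) | (right; nlinarith)

theorem IsHullEdge.det3_mul_pos {S : Finset Pt} {s t : Pt} (h : IsHullEdge S s t) {u v : Pt}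
    (hu : u ∈ S) (hv : v ∈ S) (hus : u ≠ s) (hut : u ≠ t) (hvs : v ≠ s) (hvt : v ≠ t) :
    0 < det3 s t u * det3 s t v := by
  rcases h.2.2.2 with h | h
  · exact mul_pos (h u hu hus hut) (h v hv hvs hvt)
  · exact mul_pos_of_neg_of_neg (h u hu hus hut) (h v hv hvs hvt)

theorem exists_edgeDisjoint_planePaths_of_det3_mul_pos {S : Finset Pt} (hgp : GenPos S)
    {s t u v : Pt} (hl : [s, t, u, v].Nodup) (hS : [s, t, u, v].toFinset = S)
    (hst : 0 < det3 s t v * det3 s t u) (hsv : 0 < det3 s v t * det3 s v u) :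
    ∃ l₁ l₂ : List Pt, PlanePath S l₁ ∧ PlanePath S l₂ ∧ EdgeDisjoint l₁ l₂ ∧
      l₁.head? = some s ∧ l₂.head? = some t := by
  have h₁ : [s, t, u, v].Perm [s, t, v, u] := ((List.Perm.swap v u []).cons t).cons s
  have h₂ : [s, t, u, v].Perm [t, u, s, v] :=
    (List.Perm.swap t s [u, v]).trans ((List.Perm.swap u s [v]).cons t)
  refine ⟨[s, t, v, u], [t, u, s, v], ?_, ?_, edgeDisjoint_of_nodup hl, rfl, rfl⟩
  · exact planePath_four_of_disjoint_segment hgp (hl.perm h₁)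
      ((List.toFinset_eq_of_perm _ _ h₁).symm.trans hS) (disjoint_segment_of_det3_mul_pos hst)
  · exact planePath_four_of_disjoint_segment hgp (hl.perm h₂)
      ((List.toFinset_eq_of_perm _ _ h₂).symm.trans hS)
      (disjoint_segment_of_det3_mul_pos hsv).symm

/-- On a set of 4 points in general position with `s, t` consecutive hull
vertices, there are two edge-disjoint plane Hamiltonian paths, one starting at `s`
and the other starting at `t`. -/
theorem stmt_15 (S : Finset Pt) (hcard : S.card = 4) (hgp : GenPos S)
    (s t : Pt) (hst : IsHullEdge S s t) :
    ∃ l₁ l₂ : List Pt, PlanePath S l₁ ∧ PlanePath S l₂ ∧ EdgeDisjoint l₁ l₂ ∧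
      l₁.head? = some s ∧ l₂.head? = some t := by
  obtain ⟨u, v, hl, hS⟩ := exists_nodup_toFinset_eq hcard hst.1 hst.2.1 hst.2.2.1
  have hu : u ∈ S := by simp [← hS]
  have hv : v ∈ S := by simp [← hS]
  obtain ⟨⟨-, hsu, hsv⟩, ⟨htu, htv⟩, huv⟩ := by simpa using hl
  have hside := hst.det3_mul_pos hu hv (Ne.symm hsu) (Ne.symm htu) (Ne.symm hsv) (Ne.symm htv)
  rcases det3_mul_pos_or_det3_mul_pos hside (hgp.det3_ne_zero hst.1 hu hv hsu hsv huv)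
    with h | h
  · exact exists_edgeDisjoint_planePaths_of_det3_mul_pos hgp hl hS
      (mul_comm (det3 s t u) _ ▸ hside) h
  · have hswap : [s, t, u, v].Perm [s, t, v, u] := ((List.Perm.swap v u []).cons t).cons s
    exact exists_edgeDisjoint_planePaths_of_det3_mul_pos hgp (hl.perm hswap)
      ((List.toFinset_eq_of_perm _ _ hswap).symm.trans hS) hside h
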